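/- In a tangent category with negatives, for a vertical connection K on a differential bundle 𝗊, vector fields w₁, w₂ on M and a section s of q, the curvature tensor is given by the standard expression: R_K(w₁, w₂, s) = ∇_K(w₁, ∇_K(w₂, s)) − ∇_K(w₂, ∇_K(w₁, s)) − ∇_K([w₁, w₂], s). -/

import Mathlib

open CategoryTheory CategoryTheory.Limits

open scoped Classical

universe v u

variable {C : Type u} [Category.{v} C]

/-- Chosen pullback: explicit pullback data for a cospan `f : A ⟶ Z ⟵ B : g`. -/
structure ChosenPB {A B Z : C} (f : A ⟶ Z) (g : B ⟶ Z) where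
  P : C
  pr0 : P ⟶ A
  pr1 : P ⟶ B
  comm : pr0 ≫ f = pr1 ≫ g
  pair : ∀ {X : C} (u : X ⟶ A) (v : X ⟶ B), u ≫ f = v ≫ g → (X ⟶ P)
  pair_pr0 : ∀ {X : C} (u : X ⟶ A) (v : X ⟶ B) (h : u ≫ f = v ≫ g),
    pair u v h ≫ pr0 = u
  pair_pr1 : ∀ {X : C} (u : X ⟶ A) (v : X ⟶ B) (h : u ≫ f = v ≫ g),
    pair u v h ≫ pr1 = v
  hom_ext : ∀ {X : C} (w w' : X ⟶ P),
    w ≫ pr0 = w' ≫ pr0 → w ≫ pr1 = w' ≫ pr1 → w = w'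

/-- Witness that the endofunctor `T` preserves the chosen pullback `PB`. -/
structure PBLift (T : C ⥤ C) {A B Z : C} {f : A ⟶ Z} {g : B ⟶ Z} (PB : ChosenPB f g) where
  pair : ∀ {X : C} (u : X ⟶ T.obj A) (v : X ⟶ T.obj B),
    u ≫ T.map f = v ≫ T.map g → (X ⟶ T.obj PB.P)
  pair_pr0 : ∀ {X : C} (u : X ⟶ T.obj A) (v : X ⟶ T.obj B)
    (h : u ≫ T.map f = v ≫ T.map g), pair u v h ≫ T.map PB.pr0 = u
  pair_pr1 : ∀ {X : C} (u : X ⟶ T.obj A) (v : X ⟶ T.obj B)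
    (h : u ≫ T.map f = v ≫ T.map g), pair u v h ≫ T.map PB.pr1 = v
  hom_ext : ∀ {X : C} (w w' : X ⟶ T.obj PB.P),
    w ≫ T.map PB.pr0 = w' ≫ T.map PB.pr0 → w ≫ T.map PB.pr1 = w' ≫ T.map PB.pr1 → w = w'

/-- The image of a preserved chosen pullback is again a chosen pullback. -/
def PBLift.toChosenPB {T : C ⥤ C} {A B Z : C} {f : A ⟶ Z} {g : B ⟶ Z} {PB : ChosenPB f g}
    (L : PBLift T PB) : ChosenPB (T.map f) (T.map g) where
  P := T.obj PB.P
  pr0 := T.map PB.pr0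
  pr1 := T.map PB.pr1
  comm := by rw [← T.map_comp, ← T.map_comp, PB.comm]
  pair := L.pair
  pair_pr0 := L.pair_pr0
  pair_pr1 := L.pair_pr1
  hom_ext := L.hom_ext

/-- Iterated endofunctor `Tⁿ`. -/
def fpow (T : C ⥤ C) : ℕ → C ⥤ C
  | 0 => 𝟭 C
  | n + 1 => fpow T n ⋙ T

/-- A tangent category in the sense of Cockett–Cruttwell, presented with chosen
pullbacks `T₂M` of `p_M` along itself (preserved by each `Tⁿ`), addition `+`,
projection `p`, zero `0`, vertical lift `ℓ` and canonical flip `c`, together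
with the universality of the vertical lift. Sums, associativity etc. are
expressed in generalized-element form via the chosen pullback pairings. -/
structure TangentCat (C : Type u) [Category.{v} C] where
  T : C ⥤ C
  p : T ⟶ 𝟭 C
  zero : 𝟭 C ⟶ T
  l : T ⟶ T ⋙ T
  c : T ⋙ T ⟶ T ⋙ T
  T2 : ∀ M : C, ChosenPB (p.app M) (p.app M)
  T2T : ∀ M : C, PBLift T (T2 M)
  T2Tn : ∀ (M : C) (n : ℕ), PBLift (fpow T n) (T2 M)
  add : ∀ M : C, (T2 M).P ⟶ T.obj M
  add_nat : ∀ {M N : C} (f : M ⟶ N) {X : C} (u v : X ⟶ T.obj M)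
    (h : u ≫ p.app M = v ≫ p.app M)
    (h' : (u ≫ T.map f) ≫ p.app N = (v ≫ T.map f) ≫ p.app N),
    (T2 M).pair u v h ≫ add M ≫ T.map f
      = (T2 N).pair (u ≫ T.map f) (v ≫ T.map f) h' ≫ add N
  zero_p : ∀ M : C, zero.app M ≫ p.app M = 𝟙 M
  add_p : ∀ M : C, add M ≫ p.app M = (T2 M).pr0 ≫ p.app M
  add_comm' : ∀ (M : C) {X : C} (f g : X ⟶ T.obj M) (h : f ≫ p.app M = g ≫ p.app M),
    (T2 M).pair f g h ≫ add M = (T2 M).pair g f h.symm ≫ add M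
  add_assoc' : ∀ (M : C) {X : C} (f g k : X ⟶ T.obj M)
    (h1 : f ≫ p.app M = g ≫ p.app M) (h2 : g ≫ p.app M = k ≫ p.app M)
    (h3 : ((T2 M).pair f g h1 ≫ add M) ≫ p.app M = k ≫ p.app M)
    (h4 : f ≫ p.app M = ((T2 M).pair g k h2 ≫ add M) ≫ p.app M),
    (T2 M).pair ((T2 M).pair f g h1 ≫ add M) k h3 ≫ add M
      = (T2 M).pair f ((T2 M).pair g k h2 ≫ add M) h4 ≫ add M
  add_zero' : ∀ (M : C) {X : C} (f : X ⟶ T.obj M)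
    (h : f ≫ p.app M = (f ≫ p.app M ≫ zero.app M) ≫ p.app M),
    (T2 M).pair f (f ≫ p.app M ≫ zero.app M) h ≫ add M = f
  l_Tp : ∀ M : C, l.app M ≫ T.map (p.app M) = p.app M ≫ zero.app M
  l_zero : ∀ M : C, zero.app M ≫ l.app M = zero.app M ≫ T.map (zero.app M)
  l_add : ∀ (M : C) {X : C} (f g : X ⟶ T.obj M) (h : f ≫ p.app M = g ≫ p.app M),
    ∃ w : X ⟶ T.obj (T2 M).P,
      w ≫ T.map (T2 M).pr0 = f ≫ l.app M ∧ w ≫ T.map (T2 M).pr1 = g ≫ l.app M ∧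
      (T2 M).pair f g h ≫ add M ≫ l.app M = w ≫ T.map (add M)
  c_p : ∀ M : C, c.app M ≫ p.app (T.obj M) = T.map (p.app M)
  c_zero : ∀ M : C, T.map (zero.app M) ≫ c.app M = zero.app (T.obj M)
  c_add : ∀ (M : C) {X : C} (u v : X ⟶ T.obj (T.obj M))
    (h : u ≫ T.map (p.app M) = v ≫ T.map (p.app M))
    (h' : (u ≫ c.app M) ≫ p.app (T.obj M) = (v ≫ c.app M) ≫ p.app (T.obj M)),
    ∃ w : X ⟶ T.obj (T2 M).P,
      w ≫ T.map (T2 M).pr0 = u ∧ w ≫ T.map (T2 M).pr1 = v ∧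
      w ≫ T.map (add M) ≫ c.app M
        = (T2 (T.obj M)).pair (u ≫ c.app M) (v ≫ c.app M) h' ≫ add (T.obj M)
  l_c : ∀ M : C, l.app M ≫ c.app M = l.app M
  c_c : ∀ M : C, c.app M ≫ c.app M = 𝟙 (T.obj (T.obj M))
  l_l : ∀ M : C, l.app M ≫ T.map (l.app M) = l.app M ≫ l.app (T.obj M)
  c_T_c : ∀ M : C, c.app (T.obj M) ≫ T.map (c.app M) ≫ c.app (T.obj M)
    = T.map (c.app M) ≫ c.app (T.obj M) ≫ T.map (c.app M)
  l_T_c : ∀ M : C, l.app (T.obj M) ≫ T.map (c.app M) ≫ c.app (T.obj M)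
    = c.app M ≫ T.map (l.app M)
  vmu : ∀ M : C, (T2 M).P ⟶ T.obj (T.obj M)
  vmu_spec : ∀ M : C, ∃ w : (T2 M).P ⟶ T.obj (T2 M).P,
    w ≫ T.map (T2 M).pr0 = (T2 M).pr0 ≫ l.app M ∧
    w ≫ T.map (T2 M).pr1 = (T2 M).pr1 ≫ zero.app (T.obj M) ∧
    vmu M = w ≫ T.map (add M)
  vlift : ∀ {X M : C} (f : X ⟶ T.obj (T.obj M)),
    f ≫ T.map (p.app M) = f ≫ T.map (p.app M) ≫ p.app M ≫ zero.app M → (X ⟶ (T2 M).P)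
  vlift_vmu : ∀ {X M : C} (f : X ⟶ T.obj (T.obj M))
    (h : f ≫ T.map (p.app M) = f ≫ T.map (p.app M) ≫ p.app M ≫ zero.app M),
    vlift f h ≫ vmu M = f
  vmu_mono : ∀ {X M : C} (w w' : X ⟶ (T2 M).P), w ≫ vmu M = w' ≫ vmu M → w = w'

/-- Negatives: each tangent bundle is a commutative group bundle. -/
structure HasNegatives {C : Type u} [Category.{v} C] (D : TangentCat C) where
  neg : ∀ M : C, D.T.obj M ⟶ D.T.obj M
  neg_p : ∀ M : C, neg M ≫ D.p.app M = D.p.app M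
  neg_add : ∀ (M : C) {X : C} (f : X ⟶ D.T.obj M)
    (h : f ≫ D.p.app M = (f ≫ neg M) ≫ D.p.app M),
    (D.T2 M).pair f (f ≫ neg M) h ≫ D.add M = f ≫ D.p.app M ≫ D.zero.app M

/-- Fibrewise sum of two maps into a tangent bundle (defined when the maps
agree under `p`; otherwise a default value). -/
noncomputable def TangentCat.hadd (D : TangentCat C) {X M : C}
    (f g : X ⟶ D.T.obj M) : X ⟶ D.T.obj M :=
  if h : f ≫ D.p.app M = g ≫ D.p.app M then (D.T2 M).pair f g h ≫ D.add M else f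

/-- Fibrewise difference `f - g` of two maps into a tangent bundle. -/
noncomputable def TangentCat.sub (D : TangentCat C) (N : HasNegatives D) {X M : C}
    (f g : X ⟶ D.T.obj M) : X ⟶ D.T.obj M :=
  D.hadd f (g ≫ N.neg M)

/-- The bracketing operation `{f}` for the tangent bundle, obtained from the
universality (equalizer property) of the vertical lift. -/
noncomputable def TangentCat.brkT (D : TangentCat C) {X M : C}
    (f : X ⟶ D.T.obj (D.T.obj M)) : X ⟶ D.T.obj M :=
  if h : f ≫ D.T.map (D.p.app M) = f ≫ D.T.map (D.p.app M) ≫ D.p.app M ≫ D.zero.app M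
  then D.vlift f h ≫ (D.T2 M).pr0 else f ≫ D.p.app (D.T.obj M)

/-- The Lie bracket of vector fields: `[w₁,w₂] = {w₁T(w₂) − w₂T(w₁)c}`. -/
noncomputable def TangentCat.lie (D : TangentCat C) (N : HasNegatives D) {M : C}
    (w1 w2 : M ⟶ D.T.obj M) : M ⟶ D.T.obj M :=
  D.brkT (D.sub N (w1 ≫ D.T.map w2) (w2 ≫ D.T.map w1 ≫ D.c.app M))

/-- A differential bundle `𝗊 = (q, +_q, 0_q, λ)` on `E` over `M` in the tangent
category `D`, with chosen pullbacks `E₂` (of `q` along itself) and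
`T(M) ×_M E` (of `p_M` along `q`), both preserved by each `Tⁿ`, together with
the lift axioms and the universality of the lift (in equalizer form). -/
structure DiffBundle {C : Type u} [Category.{v} C] (D : TangentCat C) (E M : C) where
  q : E ⟶ M
  E2 : ChosenPB q q
  TE2 : PBLift D.T E2
  TE2n : ∀ n : ℕ, PBLift (fpow D.T n) E2
  P : ChosenPB (D.p.app M) q
  TP : PBLift D.T P
  TPn : ∀ n : ℕ, PBLift (fpow D.T n) P
  addq : E2.P ⟶ E
  zeroq : M ⟶ E
  lam : E ⟶ D.T.obj E
  addq_q : addq ≫ q = E2.pr0 ≫ q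
  zeroq_q : zeroq ≫ q = 𝟙 M
  addq_comm : ∀ {X : C} (f g : X ⟶ E) (h : f ≫ q = g ≫ q),
    E2.pair f g h ≫ addq = E2.pair g f h.symm ≫ addq
  addq_assoc : ∀ {X : C} (f g k : X ⟶ E)
    (h1 : f ≫ q = g ≫ q) (h2 : g ≫ q = k ≫ q)
    (h3 : (E2.pair f g h1 ≫ addq) ≫ q = k ≫ q)
    (h4 : f ≫ q = (E2.pair g k h2 ≫ addq) ≫ q),
    E2.pair (E2.pair f g h1 ≫ addq) k h3 ≫ addq
      = E2.pair f (E2.pair g k h2 ≫ addq) h4 ≫ addq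
  addq_zero : ∀ {X : C} (f : X ⟶ E) (h : f ≫ q = (f ≫ q ≫ zeroq) ≫ q),
    E2.pair f (f ≫ q ≫ zeroq) h ≫ addq = f
  lam_Tq : lam ≫ D.T.map q = q ≫ D.zero.app M
  lam_zero1 : zeroq ≫ lam = D.zero.app M ≫ D.T.map zeroq
  lam_add1 : ∀ {X : C} (f g : X ⟶ E) (h : f ≫ q = g ≫ q),
    ∃ w : X ⟶ D.T.obj E2.P,
      w ≫ D.T.map E2.pr0 = f ≫ lam ∧ w ≫ D.T.map E2.pr1 = g ≫ lam ∧
      E2.pair f g h ≫ addq ≫ lam = w ≫ D.T.map addq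
  lam_p : lam ≫ D.p.app E = q ≫ zeroq
  lam_zero2 : zeroq ≫ lam = zeroq ≫ D.zero.app E
  lam_add2 : ∀ {X : C} (f g : X ⟶ E) (h : f ≫ q = g ≫ q)
    (h' : (f ≫ lam) ≫ D.p.app E = (g ≫ lam) ≫ D.p.app E),
    E2.pair f g h ≫ addq ≫ lam = (D.T2 E).pair (f ≫ lam) (g ≫ lam) h' ≫ D.add E
  lam_l : lam ≫ D.l.app E = lam ≫ D.T.map lam
  mu : E2.P ⟶ D.T.obj E
  mu_spec : ∃ w : E2.P ⟶ D.T.obj E2.P,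
    w ≫ D.T.map E2.pr0 = E2.pr0 ≫ lam ∧
    w ≫ D.T.map E2.pr1 = E2.pr1 ≫ D.zero.app E ∧
    mu = w ≫ D.T.map addq
  muLift : ∀ {X : C} (f : X ⟶ D.T.obj E),
    f ≫ D.T.map q = f ≫ D.p.app E ≫ q ≫ D.zero.app M → (X ⟶ E2.P)
  muLift_mu : ∀ {X : C} (f : X ⟶ D.T.obj E)
    (h : f ≫ D.T.map q = f ≫ D.p.app E ≫ q ≫ D.zero.app M),
    muLift f h ≫ mu = f
  muLift_q : ∀ {X : C} (f : X ⟶ D.T.obj E)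
    (h : f ≫ D.T.map q = f ≫ D.p.app E ≫ q ≫ D.zero.app M),
    muLift f h ≫ E2.pr0 ≫ q = f ≫ D.p.app E ≫ q
  mu_mono : ∀ {X : C} (w w' : X ⟶ E2.P), w ≫ mu = w' ≫ mu → w = w'

/-- The bracketing operation `{f}` for a differential bundle. -/
noncomputable def DiffBundle.brk {D : TangentCat C} {E M : C} (B : DiffBundle D E M)
    {X : C} (f : X ⟶ D.T.obj E) : X ⟶ E :=
  if h : f ≫ D.T.map B.q = f ≫ D.p.app E ≫ B.q ≫ D.zero.app M
  then B.muLift f h ≫ B.E2.pr0 else f ≫ D.p.app E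

/-- Negatives for a differential bundle (the fibrewise group structure). -/
structure BundleNegatives {D : TangentCat C} {E M : C} (B : DiffBundle D E M) where
  neg : E ⟶ E
  neg_q : neg ≫ B.q = B.q
  neg_add : ∀ {X : C} (f : X ⟶ E) (h : f ≫ B.q = (f ≫ neg) ≫ B.q),
    B.E2.pair f (f ≫ neg) h ≫ B.addq = f ≫ B.q ≫ B.zeroq

/-- Fibrewise sum of maps into `E` for the bundle addition `+_q`. -/
noncomputable def DiffBundle.qadd {D : TangentCat C} {E M : C} (B : DiffBundle D E M)
    {X : C} (f g : X ⟶ E) : X ⟶ E :=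
  if h : f ≫ B.q = g ≫ B.q then B.E2.pair f g h ≫ B.addq else f

/-- Fibrewise difference of maps into `E` for the bundle addition `+_q`. -/
noncomputable def DiffBundle.qsub {D : TangentCat C} {E M : C} (B : DiffBundle D E M)
    (NB : BundleNegatives B) {X : C} (f g : X ⟶ E) : X ⟶ E :=
  B.qadd f (g ≫ NB.neg)

/-- The horizontal descent `U = ⟨T(q), p⟩ : T(E) ⟶ T(M) ×_M E`. -/
def TangentCat.hdesc (D : TangentCat C) {E M : C} (q : E ⟶ M)
    (P : ChosenPB (D.p.app M) q) : D.T.obj E ⟶ P.P :=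
  P.pair (D.T.map q) (D.p.app E) (by simpa using D.p.naturality q)

/-- A vertical connection on the differential bundle with projection `q` and
lift `lam`: a retraction `K` of `lam` with `Kq = pq`, `Kλ = ℓT(K)` and
`Kλ = T(λ)cT(K)` (equivalently, `(K,p)` and `(K,q)` are linear bundle
morphisms). -/
def IsVerticalConnection (D : TangentCat C) {E M : C} (q : E ⟶ M)
    (lam : E ⟶ D.T.obj E) (K : D.T.obj E ⟶ E) : Prop :=
  lam ≫ K = 𝟙 E ∧
  K ≫ q = D.p.app E ≫ q ∧
  K ≫ lam = D.l.app E ≫ D.T.map K ∧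
  K ≫ lam = D.T.map lam ≫ D.c.app E ≫ D.T.map K

/-- Flatness of a vertical connection: `cT(K)K = T(K)K`. -/
def IsFlat (D : TangentCat C) {E : C} (K : D.T.obj E ⟶ E) : Prop :=
  D.c.app E ≫ D.T.map K ≫ K = D.T.map K ≫ K

/-- A horizontal connection on the differential bundle with projection `q`,
lift `lam` and horizontal pullback `P = T(M) ×_M E`: a section `H` of the
horizontal descent `U = ⟨T(q),p⟩` with `Hℓ = (ℓ×0)T(H)` and
`HT(λ)c = (0×λ)T(H)` (equivalently, `(H,1)` is linear into `p_E` and into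
`T(𝗊)`). -/
def IsHorizontalConnection (D : TangentCat C) {E M : C} (q : E ⟶ M)
    (lam : E ⟶ D.T.obj E) (P : ChosenPB (D.p.app M) q)
    (H : P.P ⟶ D.T.obj E) : Prop :=
  H ≫ D.T.map q = P.pr0 ∧
  H ≫ D.p.app E = P.pr1 ∧
  (∃ w : P.P ⟶ D.T.obj P.P,
    w ≫ D.T.map P.pr0 = P.pr0 ≫ D.l.app M ∧
    w ≫ D.T.map P.pr1 = P.pr1 ≫ D.zero.app E ∧
    H ≫ D.l.app E = w ≫ D.T.map H) ∧
  (∃ w : P.P ⟶ D.T.obj P.P,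
    w ≫ D.T.map P.pr0 = P.pr0 ≫ D.zero.app (D.T.obj M) ∧
    w ≫ D.T.map P.pr1 = P.pr1 ≫ lam ∧
    H ≫ D.T.map lam ≫ D.c.app E = w ≫ D.T.map H)

/-- A (full) connection, in unbundled form: a vertical connection `K` and a
horizontal connection `H` with `HK = π₁q0_q` and `⟨K,p⟩μ + UH = 1`. -/
noncomputable def IsConnectionPair (D : TangentCat C) {E M : C} (q : E ⟶ M)
    (lam : E ⟶ D.T.obj E) (EP : ChosenPB q q) (zeroq : M ⟶ E)
    (mu : EP.P ⟶ D.T.obj E) (P : ChosenPB (D.p.app M) q)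
    (K : D.T.obj E ⟶ E) (H : P.P ⟶ D.T.obj E) : Prop :=
  IsVerticalConnection D q lam K ∧
  IsHorizontalConnection D q lam P H ∧
  H ≫ K = P.pr1 ≫ q ≫ zeroq ∧
  ∃ R : D.T.obj E ⟶ EP.P, R ≫ EP.pr0 = K ∧ R ≫ EP.pr1 = D.p.app E ∧
    D.hadd (R ≫ mu) (D.hdesc q P ≫ H) = 𝟙 (D.T.obj E)

/-- A connection on a differential bundle. -/
noncomputable def IsConnection {D : TangentCat C} {E M : C} (B : DiffBundle D E M)
    (K : D.T.obj E ⟶ E) (H : B.P.P ⟶ D.T.obj E) : Prop :=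
  IsConnectionPair D B.q B.lam B.E2 B.zeroq B.mu B.P K H

/-- A Finsler connection on a differential bundle. -/
def IsFinslerConnection {D : TangentCat C} {E M : C} (B : DiffBundle D E M)
    (R : D.T.obj E ⟶ B.E2.P) : Prop :=
  B.mu ≫ R = 𝟙 B.E2.P ∧
  R ≫ B.E2.pr1 = D.p.app E ∧
  R ≫ B.E2.pr0 ≫ B.lam = D.T.map B.lam ≫ D.c.app E ≫ D.T.map (R ≫ B.E2.pr0) ∧
  D.l.app E ≫ D.T.map (R ≫ B.E2.pr0) = R ≫ B.E2.pr0 ≫ B.lam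

/-- The covariant derivative `∇_K(w,s) = wT(s)K`. -/
def nabla (D : TangentCat C) {E M : C} (K : D.T.obj E ⟶ E)
    (w : M ⟶ D.T.obj M) (s : M ⟶ E) : M ⟶ E :=
  w ≫ D.T.map s ≫ K


/-!
Put `ψ = T²(s)T(K)K`. Then `∇_K(w₁, ∇_K(w₂, s)) = w₁T(w₂)ψ`, and naturality of `c` gives
`R_K(w₁, w₂, s) = w₂T(w₁)cψ − ∇_K(w₂, ∇_K(w₁, s))`. The difference
`f = w₁T(w₂) − w₂T(w₁)c` is vertical. Since `(K, q)` is additive and linear, `μK = π₀`, and the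
universality of the vertical lift gives `fT(φ)K = {f}φ` for `φ = T(s)K`. Hence
`∇_K([w₁, w₂], s) = fψ = w₁T(w₂)ψ − w₂T(w₁)cψ`, because `ψ` is additive. The theorem is then the
identity `(a − b) − (a − v) = v − b` in the fibre group of `𝗊`.
-/

namespace ChosenPB

variable {A B Z : C} {f : A ⟶ Z} {g : B ⟶ Z} (PB : ChosenPB f g)

lemma pair_congr {X : C} {u u' : X ⟶ A} {v v' : X ⟶ B} (hu : u = u') (hv : v = v')
    (h : u ≫ f = v ≫ g) (h' : u' ≫ f = v' ≫ g) : PB.pair u v h = PB.pair u' v' h' := by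
  subst hu hv; rfl

lemma comp_pair {X Y : C} (e : Y ⟶ X) (u : X ⟶ A) (v : X ⟶ B) (h : u ≫ f = v ≫ g) :
    e ≫ PB.pair u v h = PB.pair (e ≫ u) (e ≫ v) (by simp only [Category.assoc, h]) :=
  PB.hom_ext _ _ (by simp only [Category.assoc, PB.pair_pr0])
    (by simp only [Category.assoc, PB.pair_pr1])

lemma pair_pr0_pr1 : PB.pair PB.pr0 PB.pr1 PB.comm = 𝟙 PB.P :=
  PB.hom_ext _ _ (by rw [PB.pair_pr0, Category.id_comp]) (by rw [PB.pair_pr1, Category.id_comp])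

end ChosenPB

structure GroupBundle (C : Type u) [Category.{v} C] where
  Et : C
  Mb : C
  q : Et ⟶ Mb
  PB : ChosenPB q q
  add : PB.P ⟶ Et
  zero : Mb ⟶ Et
  neg : Et ⟶ Et
  add_q : add ≫ q = PB.pr0 ≫ q
  zero_q : zero ≫ q = 𝟙 Mb
  add_comm' : ∀ {X : C} (f g : X ⟶ Et) (h : f ≫ q = g ≫ q),
    PB.pair f g h ≫ add = PB.pair g f h.symm ≫ add
  add_assoc' : ∀ {X : C} (f g k : X ⟶ Et)
    (h1 : f ≫ q = g ≫ q) (h2 : g ≫ q = k ≫ q)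
    (h3 : (PB.pair f g h1 ≫ add) ≫ q = k ≫ q)
    (h4 : f ≫ q = (PB.pair g k h2 ≫ add) ≫ q),
    PB.pair (PB.pair f g h1 ≫ add) k h3 ≫ add
      = PB.pair f (PB.pair g k h2 ≫ add) h4 ≫ add
  add_zero' : ∀ {X : C} (f : X ⟶ Et) (h : f ≫ q = (f ≫ q ≫ zero) ≫ q),
    PB.pair f (f ≫ q ≫ zero) h ≫ add = f
  neg_q : neg ≫ q = q
  add_neg' : ∀ {X : C} (f : X ⟶ Et) (h : f ≫ q = (f ≫ neg) ≫ q),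
    PB.pair f (f ≫ neg) h ≫ add = f ≫ q ≫ zero

namespace GroupBundle

variable (G : GroupBundle C)

@[ext]
structure Fib {X : C} (β : X ⟶ G.Mb) where
  val : X ⟶ G.Et
  val_q : val ≫ G.q = β

instance {X : C} (β : X ⟶ G.Mb) : Add (G.Fib β) :=
  ⟨fun x y => ⟨G.PB.pair x.val y.val (x.val_q.trans y.val_q.symm) ≫ G.add,
    by rw [Category.assoc, G.add_q, ← Category.assoc, G.PB.pair_pr0, x.val_q]⟩⟩

instance {X : C} (β : X ⟶ G.Mb) : Zero (G.Fib β) :=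
  ⟨⟨β ≫ G.zero, by rw [Category.assoc, G.zero_q, Category.comp_id]⟩⟩

instance {X : C} (β : X ⟶ G.Mb) : Neg (G.Fib β) :=
  ⟨fun x => ⟨x.val ≫ G.neg, by rw [Category.assoc, G.neg_q, x.val_q]⟩⟩

lemma zero_val {X : C} (β : X ⟶ G.Mb) : (0 : G.Fib β).val = β ≫ G.zero := rfl

lemma add_zero_val {X : C} {β : X ⟶ G.Mb} (x : G.Fib β) : (x + 0).val = x.val := by
  have hx : x.val ≫ G.q = (x.val ≫ G.q ≫ G.zero) ≫ G.q := by
    rw [Category.assoc, Category.assoc, G.zero_q, Category.comp_id]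
  refine (congrArg (· ≫ G.add) (G.PB.pair_congr rfl ?_ _ hx)).trans (G.add_zero' x.val hx)
  rw [zero_val, ← Category.assoc, x.val_q]

instance {X : C} (β : X ⟶ G.Mb) : AddCommGroup (G.Fib β) where
  nsmul := nsmulRec
  zsmul := zsmulRec
  add_assoc x y z := Fib.ext (G.add_assoc' x.val y.val z.val _ _ _ _)
  add_comm x y := Fib.ext (G.add_comm' x.val y.val _)
  add_zero x := Fib.ext (G.add_zero_val x)
  zero_add x := Fib.ext ((G.add_comm' _ _ _).trans (G.add_zero_val x))
  neg_add_cancel x := Fib.ext <| by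
    refine (G.add_comm' _ _ _).trans <| (G.add_neg' x.val _).trans ?_
    rw [← Category.assoc, x.val_q]
    rfl

/-- Fibrewise difference of generalized elements; it is `x` itself when `x` and `y` lie
in different fibres. -/
noncomputable def sub {X : C} (x y : X ⟶ G.Et) : X ⟶ G.Et :=
  if h : x ≫ G.q = (y ≫ G.neg) ≫ G.q then G.PB.pair x (y ≫ G.neg) h ≫ G.add else x

lemma sub_val {X : C} {β : X ⟶ G.Mb} (x y : G.Fib β) : G.sub x.val y.val = (x - y).val := by
  have h : x.val ≫ G.q = (y.val ≫ G.neg) ≫ G.q := by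
    rw [Category.assoc, G.neg_q, x.val_q, y.val_q]
  rw [sub, dif_pos h, sub_eq_add_neg]
  rfl

lemma sub_eq_val {X : C} {β : X ⟶ G.Mb} {x y : X ⟶ G.Et} (hx : x ≫ G.q = β)
    (hy : y ≫ G.q = β) : G.sub x y = ((⟨x, hx⟩ : G.Fib β) - (⟨y, hy⟩ : G.Fib β)).val :=
  G.sub_val ⟨x, hx⟩ ⟨y, hy⟩

lemma comp_sub {X Y : C} (e : Y ⟶ X) {x y : X ⟶ G.Et} (h : x ≫ G.q = y ≫ G.q) :
    e ≫ G.sub x y = G.sub (e ≫ x) (e ≫ y) := by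
  have hn : x ≫ G.q = (y ≫ G.neg) ≫ G.q := by rw [Category.assoc, G.neg_q, h]
  have hn' : (e ≫ x) ≫ G.q = ((e ≫ y) ≫ G.neg) ≫ G.q := by
    simp only [Category.assoc] at hn ⊢; rw [hn]
  rw [sub, sub, dif_pos hn, dif_pos hn', ← Category.assoc, G.PB.comp_pair]
  exact congrArg (· ≫ G.add) (G.PB.pair_congr rfl (Category.assoc _ _ _).symm _ _)

lemma sub_self {X : C} (x : X ⟶ G.Et) : G.sub x x = x ≫ G.q ≫ G.zero := by
  rw [G.sub_eq_val rfl rfl, _root_.sub_self, zero_val, Category.assoc]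

lemma sub_sub_sub_cancel_left {X : C} {x y z : X ⟶ G.Et} (hy : y ≫ G.q = x ≫ G.q)
    (hz : z ≫ G.q = x ≫ G.q) : G.sub (G.sub x y) (G.sub x z) = G.sub z y := by
  rw [G.sub_eq_val rfl hy, G.sub_eq_val rfl hz, G.sub_eq_val hz hy, G.sub_val,
    _root_.sub_sub_sub_cancel_left]

structure Hom (G H : GroupBundle C) where
  map : G.Et ⟶ H.Et
  base : G.Mb ⟶ H.Mb
  map_q : map ≫ H.q = G.q ≫ base
  map_add : ∀ {X : C} (x y : X ⟶ G.Et) (h : x ≫ G.q = y ≫ G.q)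
    (h' : (x ≫ map) ≫ H.q = (y ≫ map) ≫ H.q),
    G.PB.pair x y h ≫ G.add ≫ map = H.PB.pair (x ≫ map) (y ≫ map) h' ≫ H.add

namespace Hom

variable {G} {H L : GroupBundle C}

lemma comp_map_q (F : Hom G H) {X : C} {x y : X ⟶ G.Et} (h : x ≫ G.q = y ≫ G.q) :
    (x ≫ F.map) ≫ H.q = (y ≫ F.map) ≫ H.q := by
  rw [Category.assoc, Category.assoc, F.map_q, ← Category.assoc, h, Category.assoc]

def comp (F : Hom G H) (F' : Hom H L) : Hom G L where
  map := F.map ≫ F'.map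
  base := F.base ≫ F'.base
  map_q := by rw [Category.assoc, F'.map_q, ← Category.assoc, F.map_q, Category.assoc]
  map_add x y h h' := by
    calc G.PB.pair x y h ≫ G.add ≫ F.map ≫ F'.map
        = H.PB.pair (x ≫ F.map) (y ≫ F.map) (F.comp_map_q h) ≫ H.add ≫ F'.map := by
          rw [reassoc_of% (F.map_add x y h (F.comp_map_q h))]
      _ = L.PB.pair ((x ≫ F.map) ≫ F'.map) ((y ≫ F.map) ≫ F'.map)
            (F'.comp_map_q (F.comp_map_q h)) ≫ L.add := F'.map_add _ _ _ _
      _ = _ := congrArg (· ≫ L.add) (L.PB.pair_congr (Category.assoc _ _ _)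
            (Category.assoc _ _ _) _ _)

def ofCompMono (f : G.Et ⟶ H.Et) (b : G.Mb ⟶ H.Mb) (hf : f ≫ H.q = G.q ≫ b)
    (g : Hom H L) [Mono g.map] (F : Hom G L) (hfg : f ≫ g.map = F.map) : Hom G H where
  map := f
  base := b
  map_q := hf
  map_add x y h h' := by
    rw [← cancel_mono g.map]
    simp only [Category.assoc]
    rw [hfg, F.map_add x y h (F.comp_map_q h), g.map_add _ _ _ (g.comp_map_q h')]
    exact congrArg (· ≫ L.add) (L.PB.pair_congr (by rw [Category.assoc, hfg])
      (by rw [Category.assoc, hfg]) _ _)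

def fibHom (F : Hom G H) {X : C} (β : X ⟶ G.Mb) : G.Fib β →+ H.Fib (β ≫ F.base) :=
  AddMonoidHom.mk'
    (fun x => ⟨x.val ≫ F.map, by rw [Category.assoc, F.map_q, ← Category.assoc, x.val_q]⟩)
    fun x y => Fib.ext ((Category.assoc _ _ _).trans
      (F.map_add x.val y.val (x.val_q.trans y.val_q.symm)
        (F.comp_map_q (x.val_q.trans y.val_q.symm))))

lemma fibHom_val (F : Hom G H) {X : C} {β : X ⟶ G.Mb} (x : G.Fib β) :
    (F.fibHom β x).val = x.val ≫ F.map := rfl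

lemma add_comp (F : Hom G H) :
    G.add ≫ F.map = H.PB.pair (G.PB.pr0 ≫ F.map) (G.PB.pr1 ≫ F.map) (F.comp_map_q G.PB.comm)
      ≫ H.add := by
  simpa only [G.PB.pair_pr0_pr1, Category.id_comp] using
    F.map_add G.PB.pr0 G.PB.pr1 G.PB.comm (F.comp_map_q G.PB.comm)

lemma zero_comp (F : Hom G H) : G.zero ≫ F.map = F.base ≫ H.zero := by
  simpa only [fibHom_val, zero_val, Category.id_comp] using
    congrArg Fib.val (map_zero (F.fibHom (𝟙 G.Mb)))

lemma sub_comp (F : Hom G H) {X : C} {x y : X ⟶ G.Et} (h : x ≫ G.q = y ≫ G.q) :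
    G.sub x y ≫ F.map = H.sub (x ≫ F.map) (y ≫ F.map) := by
  rw [G.sub_eq_val rfl h.symm, ← fibHom_val, map_sub, ← H.sub_val]
  rfl

end Hom

end GroupBundle

namespace TangentCat

variable (D : TangentCat C)

lemma p_nat {A A' : C} (f : A ⟶ A') : D.T.map f ≫ D.p.app A' = D.p.app A ≫ f :=
  D.p.naturality f

lemma zero_nat {A A' : C} (f : A ⟶ A') : f ≫ D.zero.app A' = D.zero.app A ≫ D.T.map f :=
  D.zero.naturality f

lemma l_nat {A A' : C} (f : A ⟶ A') :
    D.T.map f ≫ D.l.app A' = D.l.app A ≫ D.T.map (D.T.map f) :=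
  D.l.naturality f

lemma c_nat {A A' : C} (f : A ⟶ A') :
    D.T.map (D.T.map f) ≫ D.c.app A' = D.c.app A ≫ D.T.map (D.T.map f) :=
  D.c.naturality f

lemma c_Tp (A : C) : D.c.app A ≫ D.T.map (D.p.app A) = D.p.app (D.T.obj A) := by
  rw [← D.c_p A, ← Category.assoc, D.c_c]
  exact Category.id_comp _

lemma l_pT (A : C) : D.l.app A ≫ D.p.app (D.T.obj A) = D.p.app A ≫ D.zero.app A := by
  rw [← D.l_c A, Category.assoc, D.c_p, D.l_Tp]

lemma pair_add_l (A : C) {X : C} (x y : X ⟶ D.T.obj A) (h : x ≫ D.p.app A = y ≫ D.p.app A)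
    (h' : (x ≫ D.l.app A) ≫ D.p.app (D.T.obj A) = (y ≫ D.l.app A) ≫ D.p.app (D.T.obj A)) :
    (D.T2 A).pair x y h ≫ D.add A ≫ D.l.app A
      = (D.T2 (D.T.obj A)).pair (x ≫ D.l.app A) (y ≫ D.l.app A) h' ≫ D.add (D.T.obj A) := by
  obtain ⟨w, hw0, hw1, hw⟩ := D.l_add A x y h
  have hTp : (x ≫ D.l.app A) ≫ D.T.map (D.p.app A)
      = (y ≫ D.l.app A) ≫ D.T.map (D.p.app A) := by
    simp only [Category.assoc, D.l_Tp]
    rw [reassoc_of% h]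
  have hc : ((x ≫ D.l.app A) ≫ D.c.app A) ≫ D.p.app (D.T.obj A)
      = ((y ≫ D.l.app A) ≫ D.c.app A) ≫ D.p.app (D.T.obj A) := by
    simpa only [Category.assoc, D.l_c] using h'
  obtain ⟨w', hw0', hw1', hw'⟩ := D.c_add A _ _ hTp hc
  have hww : w = w' := (D.T2T A).hom_ext _ _ (hw0.trans hw0'.symm) (hw1.trans hw1'.symm)
  -- `ℓ = ℓc`, and `c` turns the `T(+)`-sum produced by `l_add` into a `p_T`-sum
  calc (D.T2 A).pair x y h ≫ D.add A ≫ D.l.app A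
      = ((D.T2 A).pair x y h ≫ D.add A ≫ D.l.app A) ≫ D.c.app A := by
        simp only [Category.assoc, D.l_c]
    _ = w' ≫ D.T.map (D.add A) ≫ D.c.app A := by rw [hw, hww, Category.assoc]
    _ = _ := hw'.trans (congrArg (· ≫ D.add _) ((D.T2 _).pair_congr
          (by rw [Category.assoc, D.l_c]) (by rw [Category.assoc, D.l_c]) _ _))

abbrev tangentBundle (N : HasNegatives D) (A : C) : GroupBundle C where
  Et := D.T.obj A
  Mb := A
  q := D.p.app A
  PB := D.T2 A
  add := D.add A
  zero := D.zero.app A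
  neg := N.neg A
  add_q := D.add_p A
  zero_q := D.zero_p A
  add_comm' := D.add_comm' A
  add_assoc' := D.add_assoc' A
  add_zero' := D.add_zero' A
  neg_q := N.neg_p A
  add_neg' := N.neg_add A

variable (N : HasNegatives D)

lemma sub_eq_tangentBundle_sub {X A : C} (f g : X ⟶ D.T.obj A) :
    D.sub N f g = (D.tangentBundle N A).sub f g :=
  rfl

abbrev mapHom {A A' : C} (f : A ⟶ A') :
    GroupBundle.Hom (D.tangentBundle N A) (D.tangentBundle N A') where
  map := D.T.map f
  base := f
  map_q := D.p_nat f
  map_add := D.add_nat f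

def liftHom (A : C) :
    GroupBundle.Hom (D.tangentBundle N A) (D.tangentBundle N (D.T.obj A)) where
  map := D.l.app A
  base := D.zero.app A
  map_q := D.l_pT A
  map_add := D.pair_add_l A

variable {D} {M : C} {w1 : M ⟶ D.T.obj M}

lemma comp_map_p_T (hw1 : w1 ≫ D.p.app M = 𝟙 M) (w2 : M ⟶ D.T.obj M) :
    (w1 ≫ D.T.map w2) ≫ D.p.app (D.T.obj M) = w2 := by
  rw [Category.assoc, D.p_nat, reassoc_of% hw1]

lemma comp_map_c_p_T (hw1 : w1 ≫ D.p.app M = 𝟙 M) (w2 : M ⟶ D.T.obj M) :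
    (w2 ≫ D.T.map w1 ≫ D.c.app M) ≫ D.p.app (D.T.obj M) = w2 := by
  rw [Category.assoc, Category.assoc, D.c_p, ← D.T.map_comp, hw1, D.T.map_id, Category.comp_id]

lemma lie_sub_map_p {w2 : M ⟶ D.T.obj M} (hw1 : w1 ≫ D.p.app M = 𝟙 M)
    (hw2 : w2 ≫ D.p.app M = 𝟙 M) :
    D.sub N (w1 ≫ D.T.map w2) (w2 ≫ D.T.map w1 ≫ D.c.app M) ≫ D.T.map (D.p.app M)
      = D.zero.app M := by
  have hA : (w1 ≫ D.T.map w2) ≫ D.T.map (D.p.app M) = w1 := by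
    rw [Category.assoc, ← D.T.map_comp, hw2, D.T.map_id, Category.comp_id]
  have hV : (w2 ≫ D.T.map w1 ≫ D.c.app M) ≫ D.T.map (D.p.app M) = w1 := by
    rw [Category.assoc, Category.assoc, D.c_Tp, D.p_nat, reassoc_of% hw2]
  rw [D.sub_eq_tangentBundle_sub, (D.mapHom N (D.p.app M)).sub_comp
    ((comp_map_p_T hw1 w2).trans (comp_map_c_p_T hw1 w2).symm), hA, hV]
  exact ((D.tangentBundle N M).sub_self w1).trans ((reassoc_of% hw1) _)

lemma brkT_cond {X : C} {f : X ⟶ D.T.obj (D.T.obj M)} {g : X ⟶ M}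
    (hf : f ≫ D.T.map (D.p.app M) = g ≫ D.zero.app M) :
    f ≫ D.T.map (D.p.app M) = f ≫ D.T.map (D.p.app M) ≫ D.p.app M ≫ D.zero.app M := by
  rw [← Category.assoc f, hf, Category.assoc, reassoc_of% (D.zero_p M)]

end TangentCat

namespace DiffBundle

variable {D : TangentCat C} {E M : C} (B : DiffBundle D E M)

abbrev groupBundle (NB : BundleNegatives B) : GroupBundle C where
  Et := E
  Mb := M
  q := B.q
  PB := B.E2
  add := B.addq
  zero := B.zeroq
  neg := NB.neg
  add_q := B.addq_q
  zero_q := B.zeroq_q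
  add_comm' := B.addq_comm
  add_assoc' := B.addq_assoc
  add_zero' := B.addq_zero
  neg_q := NB.neg_q
  add_neg' := NB.neg_add

lemma qsub_eq_groupBundle_sub (NB : BundleNegatives B) {X : C} (f g : X ⟶ E) :
    B.qsub NB f g = (B.groupBundle NB).sub f g :=
  rfl

abbrev liftHom (N : HasNegatives D) (NB : BundleNegatives B) :
    GroupBundle.Hom (B.groupBundle NB) (D.tangentBundle N E) where
  map := B.lam
  base := B.zeroq
  map_q := B.lam_p
  map_add := B.lam_add2

lemma lam_p_comp {X : C} {x y : X ⟶ E} (h : x ≫ B.q = y ≫ B.q) :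
    (x ≫ B.lam) ≫ D.p.app E = (y ≫ B.lam) ≫ D.p.app E := by
  simp only [Category.assoc, B.lam_p, reassoc_of% h]

lemma lam_p_pair : (B.E2.pr0 ≫ B.lam) ≫ D.p.app E = (B.E2.pr1 ≫ B.lam) ≫ D.p.app E :=
  B.lam_p_comp B.E2.comm

lemma map_addq_lam_c :
    D.T.map B.addq ≫ D.T.map B.lam ≫ D.c.app E
      = (D.T2 (D.T.obj E)).pair (D.T.map B.E2.pr0 ≫ D.T.map B.lam ≫ D.c.app E)
          (D.T.map B.E2.pr1 ≫ D.T.map B.lam ≫ D.c.app E)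
          (by simp only [Category.assoc, D.c_p, ← D.T.map_comp]
              exact congrArg D.T.map (by simpa only [Category.assoc] using B.lam_p_pair))
        ≫ D.add (D.T.obj E) := by
  have hTp : (D.T.map B.E2.pr0 ≫ D.T.map B.lam) ≫ D.T.map (D.p.app E)
      = (D.T.map B.E2.pr1 ≫ D.T.map B.lam) ≫ D.T.map (D.p.app E) := by
    simp only [← D.T.map_comp, B.lam_p_pair]
  have hc : ((D.T.map B.E2.pr0 ≫ D.T.map B.lam) ≫ D.c.app E) ≫ D.p.app (D.T.obj E)
      = ((D.T.map B.E2.pr1 ≫ D.T.map B.lam) ≫ D.c.app E) ≫ D.p.app (D.T.obj E) := by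
    simpa only [Category.assoc, D.c_p] using hTp
  obtain ⟨w, hw0, hw1, hw⟩ := D.c_add E _ _ hTp hc
  have hw_eq : D.T.map ((D.T2 E).pair (B.E2.pr0 ≫ B.lam) (B.E2.pr1 ≫ B.lam) B.lam_p_pair) = w :=
    (D.T2T E).hom_ext _ _ (by rw [hw0, ← D.T.map_comp, (D.T2 E).pair_pr0, D.T.map_comp])
      (by rw [hw1, ← D.T.map_comp, (D.T2 E).pair_pr1, D.T.map_comp])
  have hlam : B.addq ≫ B.lam
      = (D.T2 E).pair (B.E2.pr0 ≫ B.lam) (B.E2.pr1 ≫ B.lam) B.lam_p_pair ≫ D.add E := by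
    simpa only [B.E2.pair_pr0_pr1, Category.id_comp] using
      B.lam_add2 B.E2.pr0 B.E2.pr1 B.E2.comm B.lam_p_pair
  rw [← D.T.map_comp_assoc, hlam, D.T.map_comp, hw_eq, Category.assoc, hw]
  exact congrArg (· ≫ D.add _) ((D.T2 _).pair_congr (Category.assoc _ _ _)
    (Category.assoc _ _ _) _ _)

lemma vmu_map (N : HasNegatives D) (NB : BundleNegatives B)
    (φ : GroupBundle.Hom (D.tangentBundle N M) (B.groupBundle NB))
    (hφ : D.l.app M ≫ D.T.map φ.map = φ.map ≫ B.lam) :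
    D.vmu M ≫ D.T.map φ.map
      = B.E2.pair ((D.T2 M).pr0 ≫ φ.map) ((D.T2 M).pr1 ≫ φ.map) (φ.comp_map_q (D.T2 M).comm)
        ≫ B.mu := by
  obtain ⟨w0, hw0a, hw0b, hvmu⟩ := D.vmu_spec M
  obtain ⟨w, hwa, hwb, hmu⟩ := B.mu_spec
  set e := B.E2.pair ((D.T2 M).pr0 ≫ φ.map) ((D.T2 M).pr1 ≫ φ.map) (φ.comp_map_q (D.T2 M).comm)
  have key : w0 ≫ D.T.map e = e ≫ w := B.TE2.hom_ext _ _
    (by rw [Category.assoc, ← D.T.map_comp, B.E2.pair_pr0, D.T.map_comp, reassoc_of% hw0a, hφ,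
      Category.assoc, hwa, reassoc_of% B.E2.pair_pr0, Category.assoc])
    (by rw [Category.assoc, ← D.T.map_comp, B.E2.pair_pr1, D.T.map_comp, reassoc_of% hw0b,
      ← D.zero_nat, Category.assoc, hwb, reassoc_of% B.E2.pair_pr1, Category.assoc])
  rw [hvmu, hmu, Category.assoc, ← D.T.map_comp, φ.add_comp, D.T.map_comp, reassoc_of% key]

end DiffBundle

namespace IsVerticalConnection

variable {D : TangentCat C} {E M : C} {B : DiffBundle D E M} {K : D.T.obj E ⟶ E}

lemma lam_K (hK : IsVerticalConnection D B.q B.lam K) : B.lam ≫ K = 𝟙 E := hK.1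

lemma K_q (hK : IsVerticalConnection D B.q B.lam K) : K ≫ B.q = D.p.app E ≫ B.q := hK.2.1

lemma K_lam_l (hK : IsVerticalConnection D B.q B.lam K) :
    K ≫ B.lam = D.l.app E ≫ D.T.map K :=
  hK.2.2.1

lemma K_lam_c (hK : IsVerticalConnection D B.q B.lam K) :
    K ≫ B.lam = D.T.map B.lam ≫ D.c.app E ≫ D.T.map K :=
  hK.2.2.2

lemma mono_lam (hK : IsVerticalConnection D B.q B.lam K) : Mono B.lam :=
  mono_of_mono_fac hK.lam_K

/-- `Kλ = ℓT(K)` is additive and `λ` is monic. -/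
def toHom (hK : IsVerticalConnection D B.q B.lam K) (N : HasNegatives D)
    (NB : BundleNegatives B) : GroupBundle.Hom (D.tangentBundle N E) (B.groupBundle NB) :=
  have := hK.mono_lam
  GroupBundle.Hom.ofCompMono K B.q hK.K_q (B.liftHom N NB)
    ((D.liftHom N E).comp (D.mapHom N K)) hK.K_lam_l

lemma zero_K (hK : IsVerticalConnection D B.q B.lam K) (N : HasNegatives D)
    (NB : BundleNegatives B) :
    D.zero.app E ≫ K = B.q ≫ B.zeroq :=
  (hK.toHom N NB).zero_comp

lemma map_pr_K_q (hK : IsVerticalConnection D B.q B.lam K) :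
    (D.T.map B.E2.pr0 ≫ K) ≫ B.q = (D.T.map B.E2.pr1 ≫ K) ≫ B.q := by
  simp only [Category.assoc, hK.K_q]
  rw [reassoc_of% (D.p_nat B.E2.pr0), reassoc_of% (D.p_nat B.E2.pr1), B.E2.comm]

lemma map_addq_K (hK : IsVerticalConnection D B.q B.lam K) :
    D.T.map B.addq ≫ K
      = B.E2.pair (D.T.map B.E2.pr0 ≫ K) (D.T.map B.E2.pr1 ≫ K) hK.map_pr_K_q ≫ B.addq := by
  have := hK.mono_lam
  have hKlam : ∀ {X : C} (x : X ⟶ D.T.obj E),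
      x ≫ D.T.map B.lam ≫ D.c.app E ≫ D.T.map K = x ≫ K ≫ B.lam := by
    intro X x; rw [hK.K_lam_c]
  have hp := B.lam_p_comp hK.map_pr_K_q
  rw [← cancel_mono B.lam]
  calc (D.T.map B.addq ≫ K) ≫ B.lam
      = D.T.map B.addq ≫ D.T.map B.lam ≫ D.c.app E ≫ D.T.map K := by
        rw [Category.assoc, hKlam]
    _ = (D.T2 E).pair ((D.T.map B.E2.pr0 ≫ D.T.map B.lam ≫ D.c.app E) ≫ D.T.map K)
          ((D.T.map B.E2.pr1 ≫ D.T.map B.lam ≫ D.c.app E) ≫ D.T.map K)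
          (by simpa only [Category.assoc, hKlam] using hp) ≫ D.add E := by
        rw [reassoc_of% B.map_addq_lam_c, D.add_nat]
    _ = (D.T2 E).pair ((D.T.map B.E2.pr0 ≫ K) ≫ B.lam) ((D.T.map B.E2.pr1 ≫ K) ≫ B.lam) hp
          ≫ D.add E :=
        congrArg (· ≫ D.add E) ((D.T2 E).pair_congr (by simp only [Category.assoc, hKlam])
          (by simp only [Category.assoc, hKlam]) _ _)
    _ = _ := by rw [Category.assoc _ B.addq, B.lam_add2]

lemma mu_K (hK : IsVerticalConnection D B.q B.lam K) (N : HasNegatives D)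
    (NB : BundleNegatives B) : B.mu ≫ K = B.E2.pr0 := by
  obtain ⟨w, hw0, hw1, hmu⟩ := B.mu_spec
  have hz : B.E2.pr0 ≫ B.q = (B.E2.pr0 ≫ B.q ≫ B.zeroq) ≫ B.q := by
    rw [Category.assoc, Category.assoc, B.zeroq_q, Category.comp_id]
  calc B.mu ≫ K
      = B.E2.pair (w ≫ D.T.map B.E2.pr0 ≫ K) (w ≫ D.T.map B.E2.pr1 ≫ K)
          (by simpa only [Category.assoc] using w ≫= hK.map_pr_K_q) ≫ B.addq := by
        rw [hmu, Category.assoc, hK.map_addq_K, reassoc_of% B.E2.comp_pair]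
    _ = B.E2.pair B.E2.pr0 (B.E2.pr0 ≫ B.q ≫ B.zeroq) hz ≫ B.addq :=
        congrArg (· ≫ B.addq) (B.E2.pair_congr (by rw [reassoc_of% hw0, hK.lam_K, Category.comp_id])
          (by rw [reassoc_of% hw1, hK.zero_K N NB, reassoc_of% B.E2.comm]) _ _)
    _ = B.E2.pr0 := B.addq_zero _ hz

lemma brkT_comp (hK : IsVerticalConnection D B.q B.lam K) (N : HasNegatives D)
    (NB : BundleNegatives B) (φ : GroupBundle.Hom (D.tangentBundle N M) (B.groupBundle NB))
    (hφ : D.l.app M ≫ D.T.map φ.map = φ.map ≫ B.lam) {X : C} (f : X ⟶ D.T.obj (D.T.obj M))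
    (hf : f ≫ D.T.map (D.p.app M) = f ≫ D.T.map (D.p.app M) ≫ D.p.app M ≫ D.zero.app M) :
    f ≫ D.T.map φ.map ≫ K = D.brkT f ≫ φ.map := by
  rw [TangentCat.brkT, dif_pos hf, Category.assoc]
  conv_lhs => rw [← D.vlift_vmu f hf]
  rw [Category.assoc, reassoc_of% (B.vmu_map N NB φ hφ), hK.mu_K N NB, B.E2.pair_pr0]

lemma l_map_comp (hK : IsVerticalConnection D B.q B.lam K) (s : M ⟶ E) :
    D.l.app M ≫ D.T.map (D.T.map s ≫ K) = (D.T.map s ≫ K) ≫ B.lam := by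
  rw [D.T.map_comp, ← Category.assoc, ← D.l_nat, Category.assoc, Category.assoc, ← hK.K_lam_l]

lemma nabla_q (hK : IsVerticalConnection D B.q B.lam K) {w : M ⟶ D.T.obj M}
    (hw : w ≫ D.p.app M = 𝟙 M) (s : M ⟶ E) : nabla D K w s ≫ B.q = s ≫ B.q := by
  rw [nabla, Category.assoc, Category.assoc, hK.K_q, reassoc_of% (D.p_nat s), reassoc_of% hw]

lemma map_map_K_K_q (hK : IsVerticalConnection D B.q B.lam K) (s : M ⟶ E) :
    D.T.map (D.T.map s) ≫ D.T.map K ≫ K ≫ B.q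
      = D.p.app (D.T.obj M) ≫ D.p.app M ≫ s ≫ B.q := by
  rw [hK.K_q, reassoc_of% (D.p_nat K), hK.K_q, reassoc_of% (D.p_nat (D.T.map s)),
    reassoc_of% (D.p_nat s)]

lemma nabla_lie (hK : IsVerticalConnection D B.q B.lam K) (N : HasNegatives D)
    (NB : BundleNegatives B) {w1 w2 : M ⟶ D.T.obj M} (hw1 : w1 ≫ D.p.app M = 𝟙 M)
    (hw2 : w2 ≫ D.p.app M = 𝟙 M) (s : M ⟶ E) :
    nabla D K (D.lie N w1 w2) s
      = B.qsub NB (nabla D K w1 (nabla D K w2 s))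
          (w2 ≫ D.T.map w1 ≫ D.c.app M ≫ D.T.map (D.T.map s) ≫ D.T.map K ≫ K) := by
  let φ := (D.mapHom N s).comp (hK.toHom N NB)
  let ψ := (D.mapHom N φ.map).comp (hK.toHom N NB)
  have hf := D.brkT_cond ((D.lie_sub_map_p N hw1 hw2).trans (Category.id_comp _).symm)
  calc nabla D K (D.lie N w1 w2) s
      = D.brkT (D.sub N (w1 ≫ D.T.map w2) (w2 ≫ D.T.map w1 ≫ D.c.app M)) ≫ φ.map := rfl
    _ = D.sub N (w1 ≫ D.T.map w2) (w2 ≫ D.T.map w1 ≫ D.c.app M) ≫ ψ.map :=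
        (hK.brkT_comp N NB φ (hK.l_map_comp s) _ hf).symm
    _ = B.qsub NB ((w1 ≫ D.T.map w2) ≫ ψ.map) ((w2 ≫ D.T.map w1 ≫ D.c.app M) ≫ ψ.map) :=
        ψ.sub_comp ((D.comp_map_p_T hw1 w2).trans (D.comp_map_c_p_T hw1 w2).symm)
    _ = _ := by
        simp only [ψ, φ, nabla, GroupBundle.Hom.comp, toHom, GroupBundle.Hom.ofCompMono,
          Functor.map_comp, Category.assoc]

lemma curvature_tensor_eq (hK : IsVerticalConnection D B.q B.lam K) (NB : BundleNegatives B)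
    (w1 w2 : M ⟶ D.T.obj M) (s : M ⟶ E) :
    w2 ≫ D.T.map w1 ≫ D.T.map (D.T.map s) ≫
        B.qsub NB (D.c.app E ≫ D.T.map K ≫ K) (D.T.map K ≫ K)
      = B.qsub NB (w2 ≫ D.T.map w1 ≫ D.c.app M ≫ D.T.map (D.T.map s) ≫ D.T.map K ≫ K)
          (nabla D K w2 (nabla D K w1 s)) := by
  have hq : (D.c.app E ≫ D.T.map K ≫ K) ≫ B.q = (D.T.map K ≫ K) ≫ B.q := by
    simp only [Category.assoc, hK.K_q, reassoc_of% (D.p_nat K)]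
    rw [reassoc_of% (D.c_p E), reassoc_of% (D.p_nat (D.p.app E))]
  rw [B.qsub_eq_groupBundle_sub, B.qsub_eq_groupBundle_sub, ← Category.assoc, ← Category.assoc,
    (B.groupBundle NB).comp_sub _ hq]
  congr 1
  · simp only [Category.assoc, reassoc_of% (D.c_nat s)]
  · simp only [nabla, Functor.map_comp, Category.assoc]

end IsVerticalConnection

theorem stmt5_general (D : TangentCat C) (N : HasNegatives D) {E M : C}
    (B : DiffBundle D E M) (NB : BundleNegatives B)
    (K : D.T.obj E ⟶ E) (hK : IsVerticalConnection D B.q B.lam K)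
    (w1 w2 : M ⟶ D.T.obj M) (hw1 : w1 ≫ D.p.app M = 𝟙 M)
    (hw2 : w2 ≫ D.p.app M = 𝟙 M)
    (s : M ⟶ E) :
    w2 ≫ D.T.map w1 ≫ D.T.map (D.T.map s) ≫
        B.qsub NB (D.c.app E ≫ D.T.map K ≫ K) (D.T.map K ≫ K)
      = B.qsub NB
          (B.qsub NB (nabla D K w1 (nabla D K w2 s))
            (nabla D K w2 (nabla D K w1 s)))
          (nabla D K (D.lie N w1 w2) s) := by
  have hx : nabla D K w1 (nabla D K w2 s) ≫ B.q = s ≫ B.q := by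
    rw [hK.nabla_q hw1, hK.nabla_q hw2]
  have hy : nabla D K w2 (nabla D K w1 s) ≫ B.q = s ≫ B.q := by
    rw [hK.nabla_q hw2, hK.nabla_q hw1]
  have hz : (w2 ≫ D.T.map w1 ≫ D.c.app M ≫ D.T.map (D.T.map s) ≫ D.T.map K ≫ K) ≫ B.q
      = s ≫ B.q := by
    simp only [Category.assoc, hK.map_map_K_K_q, reassoc_of% (D.c_p M)]
    rw [← D.T.map_comp_assoc, hw1, D.T.map_id, Category.id_comp, reassoc_of% hw2]
  rw [hK.curvature_tensor_eq NB, hK.nabla_lie N NB hw1 hw2]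
  simp only [B.qsub_eq_groupBundle_sub]
  exact (B.groupBundle NB).sub_sub_sub_cancel_left (hy.trans hx.symm)
    (hz.trans hx.symm) |>.symm

/-- In a tangent category with negatives, for a vertical
connection `K` on a differential bundle `𝗊` (whose fibrewise addition has
negatives `NB`), vector fields `w₁, w₂` on `M` and a section `s` of `q`, the
curvature tensor `R_K(w₁,w₂,s) = w₂T(w₁)T²(s)C_K` (with
`C_K = cT(K)K − T(K)K`) is given by the standard expression
`∇_K(w₁, ∇_K(w₂,s)) − ∇_K(w₂, ∇_K(w₁,s)) − ∇_K([w₁,w₂],s)`. -/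
theorem stmt5 (D : TangentCat C) (N : HasNegatives D) {E M : C}
    (B : DiffBundle D E M) (NB : BundleNegatives B)
    (K : D.T.obj E ⟶ E) (hK : IsVerticalConnection D B.q B.lam K)
    (w1 w2 : M ⟶ D.T.obj M) (hw1 : w1 ≫ D.p.app M = 𝟙 M)
    (hw2 : w2 ≫ D.p.app M = 𝟙 M)
    (s : M ⟶ E) (hs : s ≫ B.q = 𝟙 M) :
    w2 ≫ D.T.map w1 ≫ D.T.map (D.T.map s) ≫
        B.qsub NB (D.c.app E ≫ D.T.map K ≫ K) (D.T.map K ≫ K)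
      = B.qsub NB
          (B.qsub NB (nabla D K w1 (nabla D K w2 s))
            (nabla D K w2 (nabla D K w1 s)))
          (nabla D K (D.lie N w1 w2) s) :=
  stmt5_general D N B NB K hK w1 w2 hw1 hw2 s
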